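/- Let X be a Banach space with a Schauder basis (e_j)_{j=1}^∞ that is λ-asymptotic c₀, i.e., for every normalized block basis (x_j)_{j=1}^∞ of (e_j) and every n ∈ ℕ there exist indices j_1 < ... < j_n with max_{1≤i≤n}|a_i| ≤ ‖Σ_{i=1}^n a_i x_{j_i}‖ ≤ λ · max_{1≤i≤n}|a_i| for all scalars a_1, ..., a_n. Then γ₀(X) ≤ λ; that is, whenever the closed unit ball of X contains a weakly null sequence (x_n)_{n=1}^∞ with ‖x_n − x_m‖ ≥ r for all n ≠ m, one has r ≤ λ. -/

import Mathlib

open Filter Topology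

/-- The constant `γ₀(X)`: the supremum of all `r ≥ 0` such that the closed unit ball of
`X` contains a weakly null `r`-separated sequence. -/
noncomputable def gammaZero (X : Type*) [NormedAddCommGroup X] [NormedSpace ℝ X] : ℝ :=
  sSup {r : ℝ | 0 ≤ r ∧ ∃ x : ℕ → X, (∀ n, ‖x n‖ ≤ 1) ∧
    (∀ f : X →L[ℝ] ℝ, Tendsto (fun n => f (x n)) atTop (nhds 0)) ∧
    ∀ n m : ℕ, n ≠ m → r ≤ ‖x n - x m‖}

/-- `e` is a Schauder basis of `X`: every `x ∈ X` has a unique expansion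
`x = Σ_{j} a j • e j` with norm-convergent partial sums. -/
def IsSchauderBasis {X : Type*} [NormedAddCommGroup X] [NormedSpace ℝ X] (e : ℕ → X) : Prop :=
  ∀ x : X, ∃! a : ℕ → ℝ,
    Tendsto (fun N => ∑ j ∈ Finset.range N, a j • e j) atTop (nhds x)

/-- `x` is a normalised block basis of `e`. -/
def IsNormalizedBlockBasis {X : Type*} [NormedAddCommGroup X] [NormedSpace ℝ X]
    (e x : ℕ → X) : Prop :=
  ∃ (F : ℕ → Finset ℕ) (a : ℕ → ℝ),
    (∀ j, (F j).Nonempty) ∧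
    (∀ j, ∀ i ∈ F j, ∀ i' ∈ F (j + 1), i < i') ∧
    (∀ j, x j = ∑ i ∈ F j, a i • e i) ∧
    (∀ j, ‖x j‖ = 1)

/-- The basis `e` is `λ`-asymptotic `c₀`. -/
def IsAsymptoticC0 {X : Type*} [NormedAddCommGroup X] [NormedSpace ℝ X]
    (e : ℕ → X) (lam : ℝ) : Prop :=
  ∀ x : ℕ → X, IsNormalizedBlockBasis e x →
    ∀ n : ℕ, ∃ j : Fin n → ℕ, StrictMono j ∧
      ∀ a : Fin n → ℝ,
        (∀ i, |a i| ≤ ‖∑ i, a i • x (j i)‖) ∧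
        ‖∑ i, a i • x (j i)‖ ≤ lam * ⨆ i, |a i|

/-! A weakly null sequence is, after an `ε`-perturbation and passing to a subsequence, a block
sequence of the basis (gliding hump: each term is small on any fixed initial segment of
coordinates, and has a small tail). Applying asymptotic `c₀` to two of these blocks bounds
their distance by `λ (1 + ε)`, so `r ≤ λ (1 + ε) + 2 ε`. The blocks can be normalized because for
`r > 1` separation forces `‖x n‖ ≥ r - 1`, while `r ≤ 1 ≤ λ` trivially. Weak nullity gives
coordinatewise nullity because the coordinate functionals are continuous, by the open mapping
theorem applied to the space of convergent partial-sum sequences. -/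

namespace IsSchauderBasis

variable {X : Type*} [NormedAddCommGroup X] [NormedSpace ℝ X] {e : ℕ → X}

noncomputable def coef (h : IsSchauderBasis e) (x : X) : ℕ → ℝ :=
  (h x).exists.choose

theorem tendsto_sum_coef_smul (h : IsSchauderBasis e) (x : X) :
    Tendsto (fun N => ∑ j ∈ Finset.range N, h.coef x j • e j) atTop (𝓝 x) :=
  (h x).exists.choose_spec

theorem coef_eq_of_tendsto (h : IsSchauderBasis e) {x : X} {a : ℕ → ℝ}
    (ha : Tendsto (fun N => ∑ j ∈ Finset.range N, a j • e j) atTop (𝓝 x)) : h.coef x = a :=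
  (h x).unique (h.tendsto_sum_coef_smul x) ha

theorem coef_zero (h : IsSchauderBasis e) : h.coef 0 = 0 :=
  h.coef_eq_of_tendsto (by simp)

theorem coef_basis (h : IsSchauderBasis e) (j : ℕ) : h.coef (e j) = Pi.single j 1 := by
  refine h.coef_eq_of_tendsto (tendsto_const_nhds.congr' ?_)
  filter_upwards [eventually_gt_atTop j] with N hN
  rw [Finset.sum_eq_single j (fun i _ hij => by simp [hij]) (by simp [hN]), Pi.single_eq_same,
    one_smul]

theorem ne_zero (h : IsSchauderBasis e) (j : ℕ) : e j ≠ 0 := fun hj => by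
  simpa [hj, h.coef_zero] using congrFun (h.coef_basis j) j

end IsSchauderBasis

section PartialSums

open OnePoint ContinuousMap

variable {X : Type*} [NormedAddCommGroup X] [NormedSpace ℝ X] {e : ℕ → X}

/-- Sequences of partial sums `(∑ j < N, a j • e j)_N` that converge, encoded as continuous maps
on the one-point compactification `ℕ ∪ {∞}`, whose value at `∞` is the limit. -/
def partialSumSubmodule (e : ℕ → X) : Submodule ℝ C(OnePoint ℕ, X) :=
  LinearMap.ker (evalCLM ℝ ((0 : ℕ) : OnePoint ℕ) : C(OnePoint ℕ, X) →L[ℝ] X).toLinearMap ⊓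
    ⨅ N : ℕ, (ℝ ∙ e N).comap
      (evalCLM ℝ ((N + 1 : ℕ) : OnePoint ℕ) - evalCLM ℝ ((N : ℕ) : OnePoint ℕ) :
        C(OnePoint ℕ, X) →L[ℝ] X).toLinearMap

theorem mem_partialSumSubmodule {u : C(OnePoint ℕ, X)} :
    u ∈ partialSumSubmodule e ↔ u (0 : ℕ) = 0 ∧ ∀ N : ℕ, u (N + 1 : ℕ) - u N ∈ ℝ ∙ e N := by
  simp [partialSumSubmodule]

theorem isClosed_partialSumSubmodule (e : ℕ → X) :
    IsClosed (partialSumSubmodule e : Set C(OnePoint ℕ, X)) := by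
  refine (ContinuousLinearMap.isClosed_ker _).inter ?_
  rw [Submodule.coe_iInf]
  exact isClosed_iInter fun N =>
    (Submodule.closed_of_finiteDimensional (ℝ ∙ e N)).preimage (ContinuousLinearMap.continuous _)

instance [CompleteSpace X] : CompleteSpace (partialSumSubmodule e) :=
  (isClosed_partialSumSubmodule e).completeSpace_coe

theorem IsSchauderBasis.apply_coe_eq_sum (h : IsSchauderBasis e) {u : C(OnePoint ℕ, X)}
    (hu : u ∈ partialSumSubmodule e) (N : ℕ) :
    u N = ∑ j ∈ Finset.range N, h.coef (u ∞) j • e j := by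
  rw [mem_partialSumSubmodule] at hu
  choose a ha using fun N => Submodule.mem_span_singleton.mp (hu.2 N)
  have hsum : ∀ N : ℕ, u N = ∑ j ∈ Finset.range N, a j • e j := by
    intro N
    induction N with
    | zero => simpa using hu.1
    | succ N ih => rw [Finset.sum_range_succ, ← ih, ha]; abel
  rw [h.coef_eq_of_tendsto (x := u ∞) (a := a), hsum]
  simpa only [← hsum] using (OnePoint.continuous_iff_from_nat u).mp u.continuous

def partialSumLimit (e : ℕ → X) : partialSumSubmodule e →L[ℝ] X :=
  (evalCLM ℝ ∞).comp (partialSumSubmodule e).subtypeL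

theorem partialSumLimit_apply (u : partialSumSubmodule e) :
    partialSumLimit e u = (u : C(OnePoint ℕ, X)) ∞ :=
  rfl

theorem IsSchauderBasis.injective_partialSumLimit (h : IsSchauderBasis e) :
    Function.Injective (partialSumLimit e) := by
  refine (injective_iff_map_eq_zero _).mpr fun u hu => ?_
  rw [partialSumLimit_apply] at hu
  ext p
  induction p using OnePoint.rec with
  | infty => exact hu
  | coe N => simp [h.apply_coe_eq_sum u.2, hu, h.coef_zero]

theorem IsSchauderBasis.surjective_partialSumLimit (h : IsSchauderBasis e) :
    Function.Surjective (partialSumLimit e) := by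
  intro x
  set s : ℕ → X := fun N => ∑ j ∈ Finset.range N, h.coef x j • e j
  let u := continuousMapMkNat s x (h.tendsto_sum_coef_smul x)
  have hu : u ∈ partialSumSubmodule e := by
    refine mem_partialSumSubmodule.mpr ⟨show s 0 = 0 from Finset.sum_range_zero _, fun N => ?_⟩
    refine Submodule.mem_span_singleton.mpr ⟨h.coef x N, ?_⟩
    change _ = s (N + 1) - s N
    simp [s, Finset.sum_range_succ]
  exact ⟨⟨u, hu⟩, rfl⟩

variable [CompleteSpace X]

/-- By the open mapping theorem, taking limits is an isomorphism of Banach spaces. -/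
noncomputable def IsSchauderBasis.partialSumEquiv (h : IsSchauderBasis e) :
    partialSumSubmodule e ≃L[ℝ] X :=
  .ofBijective (partialSumLimit e) (LinearMap.ker_eq_bot.mpr h.injective_partialSumLimit)
    (LinearMap.range_eq_top.mpr h.surjective_partialSumLimit)

/-- The `j`-th coordinate functional, obtained from the increment `u (j + 1) - u j = a j • e j`
of the partial sums `u` of `x` by a norming functional of `e j`. -/
noncomputable def IsSchauderBasis.coord (h : IsSchauderBasis e) (j : ℕ) : StrongDual ℝ X :=
  ‖e j‖⁻¹ • (exists_dual_vector ℝ (e j) (norm_ne_zero_iff.mpr (h.ne_zero j))).choose.comp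
    (ContinuousLinearMap.comp
      (evalCLM ℝ ((j + 1 : ℕ) : OnePoint ℕ) - evalCLM ℝ (j : OnePoint ℕ))
      ((partialSumSubmodule e).subtypeL.comp h.partialSumEquiv.symm.toContinuousLinearMap))

theorem IsSchauderBasis.coord_apply (h : IsSchauderBasis e) (j : ℕ) (x : X) :
    h.coord j x = h.coef x j := by
  set g := (exists_dual_vector ℝ (e j) (norm_ne_zero_iff.mpr (h.ne_zero j))).choose
  have hg : g (e j) = ‖e j‖ :=
    (exists_dual_vector ℝ (e j) (norm_ne_zero_iff.mpr (h.ne_zero j))).choose_spec.2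
  set u := h.partialSumEquiv.symm x
  have hux : (u : C(OnePoint ℕ, X)) ∞ = x := h.partialSumEquiv.apply_symm_apply x
  have hinc : (u : C(OnePoint ℕ, X)) (j + 1 : ℕ) - (u : C(OnePoint ℕ, X)) j = h.coef x j • e j := by
    rw [h.apply_coe_eq_sum u.2, h.apply_coe_eq_sum u.2, Finset.sum_range_succ, hux]; abel
  change ‖e j‖⁻¹ * g ((u : C(OnePoint ℕ, X)) (j + 1 : ℕ) - (u : C(OnePoint ℕ, X)) j) = _
  rw [hinc, _root_.map_smul, hg, smul_eq_mul, mul_left_comm,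
    inv_mul_cancel₀ (norm_ne_zero_iff.mpr (h.ne_zero j)), mul_one]

noncomputable def IsSchauderBasis.toSchauderBasis (h : IsSchauderBasis e) : SchauderBasis ℝ X where
  basis := e
  coord := h.coord
  ortho i j := by simp [coord_apply, coef_basis, Pi.single_apply]
  expansion x := by
    rw [HasSum, SummationFilter.conditional_filter_eq_map_range, tendsto_map'_iff]
    simpa [Function.comp_def, coord_apply] using h.tendsto_sum_coef_smul x

end PartialSums

section BlockBases

variable {X : Type*} [NormedAddCommGroup X] [NormedSpace ℝ X]

theorem isNormalizedBlockBasis_of_eq_sum_Ico {e w : ℕ → X} {N : ℕ → ℕ} (hN : StrictMono N)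
    (c : ℕ → ℕ → ℝ) (hw : ∀ k, w k = ∑ i ∈ Finset.Ico (N k) (N (k + 1)), c k i • e i)
    (hnorm : ∀ k, ‖w k‖ = 1) : IsNormalizedBlockBasis e w := by
  have hex : ∀ i, ∃ k, i < N (k + 1) := fun i => ⟨i, i.lt_succ_self.trans_le (hN.id_le _)⟩
  have hblock : ∀ k, ∀ i ∈ Finset.Ico (N k) (N (k + 1)), Nat.find (hex i) = k := by
    intro k i hi
    rw [Finset.mem_Ico] at hi
    refine le_antisymm (Nat.find_min' _ hi.2) (not_lt.mp fun hlt => ?_)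
    exact ((Nat.find_spec (hex i)).trans_le (hN.monotone hlt)).not_ge hi.1
  refine ⟨fun k => Finset.Ico (N k) (N (k + 1)), fun i => c (Nat.find (hex i)) i,
    fun k => Finset.nonempty_Ico.mpr (hN k.lt_succ_self), fun k i hi i' hi' => ?_,
    fun k => (hw k).trans (Finset.sum_congr rfl fun i hi => by simp only [hblock k i hi]), hnorm⟩
  exact (Finset.mem_Ico.mp hi).2.trans_le (Finset.mem_Ico.mp hi').1

variable {e w : ℕ → X} {lam : ℝ}

theorem IsAsymptoticC0.one_le_of_isNormalizedBlockBasis (h : IsAsymptoticC0 e lam)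
    (hw : IsNormalizedBlockBasis e w) : 1 ≤ lam := by
  obtain ⟨j, -, hest⟩ := h w hw 1
  obtain ⟨hlow, hup⟩ := hest fun _ => 1
  simpa using (hlow 0).trans hup

theorem IsAsymptoticC0.one_le (h : IsAsymptoticC0 e lam) (he : ∀ j, e j ≠ 0) : 1 ≤ lam :=
  h.one_le_of_isNormalizedBlockBasis <|
    isNormalizedBlockBasis_of_eq_sum_Ico (w := fun k => ‖e k‖⁻¹ • e k) strictMono_id
      (fun _ i => ‖e i‖⁻¹) (fun k => by simp) (fun k => by simpa using norm_smul_inv_norm (𝕜 := ℝ) (he k))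

theorem IsAsymptoticC0.exists_norm_smul_sub_smul_le (h : IsAsymptoticC0 e lam)
    (hw : IsNormalizedBlockBasis e w) {c : ℕ → ℝ} {M : ℝ} (hc : ∀ k, |c k| ≤ M) :
    ∃ k l, k < l ∧ ‖c k • w k - c l • w l‖ ≤ lam * M := by
  obtain ⟨j, hj, hest⟩ := h w hw 2
  obtain ⟨-, hup⟩ := hest ![c (j 0), -c (j 1)]
  have hsup : ⨆ i, |![c (j 0), -c (j 1)] i| ≤ M :=
    ciSup_le fun i => by fin_cases i <;> simp [hc]
  refine ⟨j 0, j 1, hj Fin.zero_lt_one, ?_⟩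
  calc ‖c (j 0) • w (j 0) - c (j 1) • w (j 1)‖ = ‖∑ i, ![c (j 0), -c (j 1)] i • w (j i)‖ := by
        simp [Fin.sum_univ_two, sub_eq_add_neg]
    _ ≤ lam * M := hup.trans (mul_le_mul_of_nonneg_left hsup
        (zero_le_one.trans (h.one_le_of_isNormalizedBlockBasis hw)))

end BlockBases

namespace SchauderBasis

variable {X : Type*} [NormedAddCommGroup X] [NormedSpace ℝ X] (b : SchauderBasis ℝ X)
  {y : ℕ → X}

theorem tendsto_proj_of_weaklyNull (hy : ∀ f : X →L[ℝ] ℝ, Tendsto (fun n => f (y n)) atTop (𝓝 0))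
    (N : ℕ) : Tendsto (fun n => b.proj N (y n)) atTop (𝓝 0) := by
  simpa using tendsto_finsetSum (Finset.range N) fun i _ => (hy (b.coord i)).smul_const (b i)

theorem exists_gliding_hump (hy : ∀ f : X →L[ℝ] ℝ, Tendsto (fun n => f (y n)) atTop (𝓝 0))
    {ε : ℝ} (hε : 0 < ε) :
    ∃ n N : ℕ → ℕ, StrictMono n ∧ StrictMono N ∧ ∀ k,
      ‖y (n k) - (b.proj (N (k + 1)) (y (n k)) - b.proj (N k) (y (n k)))‖ ≤ ε := by
  have hstep : ∀ p : ℕ × ℕ, ∃ q : ℕ × ℕ, p.1 < q.1 ∧ p.2 < q.2 ∧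
      ‖b.proj p.2 (y q.1)‖ ≤ ε / 2 ∧ ‖y q.1 - b.proj q.2 (y q.1)‖ ≤ ε / 2 := by
    intro p
    obtain ⟨m, hm, hhead⟩ := ((eventually_gt_atTop p.1).and
      ((b.tendsto_proj_of_weaklyNull hy p.2).eventually
        (Metric.closedBall_mem_nhds 0 (half_pos hε)))).exists
    obtain ⟨M, hM, htail⟩ := ((eventually_gt_atTop p.2).and
      ((b.tendsto_proj (y m)).eventually
        (Metric.closedBall_mem_nhds (y m) (half_pos hε)))).exists
    rw [dist_zero_right] at hhead
    rw [dist_comm, dist_eq_norm] at htail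
    exact ⟨(m, M), hm, hM, hhead, htail⟩
  choose step hstep₁ hstep₂ hhead htail using hstep
  set Q : ℕ → ℕ × ℕ := fun k => step^[k] (0, 0)
  have hQ : ∀ k, Q (k + 1) = step (Q k) := fun k => Function.iterate_succ_apply' _ _ _
  refine ⟨fun k => (Q (k + 1)).1, fun k => (Q k).2,
    strictMono_nat_of_lt_succ fun k => by simpa only [hQ (k + 1)] using hstep₁ (Q (k + 1)),
    strictMono_nat_of_lt_succ fun k => by simpa only [hQ k] using hstep₂ (Q k), fun k => ?_⟩
  simp only [hQ k]
  calc _ = ‖(y (step (Q k)).1 - b.proj (step (Q k)).2 (y (step (Q k)).1))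
        + b.proj (Q k).2 (y (step (Q k)).1)‖ := by congr 1; abel
    _ ≤ ε / 2 + ε / 2 := norm_add_le_of_le (htail (Q k)) (hhead (Q k))
    _ = ε := add_halves ε

end SchauderBasis

namespace IsAsymptoticC0

variable {X : Type*} [NormedAddCommGroup X] [NormedSpace ℝ X] {b : SchauderBasis ℝ X}
  {lam : ℝ} {x : ℕ → X}

theorem exists_norm_sub_le (h : IsAsymptoticC0 b lam) (hx : ∀ n, ‖x n‖ ≤ 1)
    (hw : ∀ f : X →L[ℝ] ℝ, Tendsto (fun n => f (x n)) atTop (𝓝 0)) {ε : ℝ} (hε : 0 < ε)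
    (hεx : ∀ n, ε < ‖x n‖) : ∃ n m, n ≠ m ∧ ‖x n - x m‖ ≤ lam * (1 + ε) + 2 * ε := by
  obtain ⟨n, N, hn, hN, hclose⟩ := b.exists_gliding_hump hw hε
  set u : ℕ → X := fun k => b.proj (N (k + 1)) (x (n k)) - b.proj (N k) (x (n k))
  replace hclose : ∀ k, ‖x (n k) - u k‖ ≤ ε := hclose
  have hu_ne : ∀ k, u k ≠ 0 := fun k hk => by
    have := hclose k
    rw [hk, sub_zero] at this
    linarith [hεx (n k)]
  have hu_le : ∀ k, ‖u k‖ ≤ 1 + ε := fun k => by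
    linarith [norm_sub_norm_le (u k) (x (n k)), norm_sub_rev (u k) (x (n k)), hclose k, hx (n k)]
  have hblock : IsNormalizedBlockBasis b fun k => ‖u k‖⁻¹ • u k := by
    refine isNormalizedBlockBasis_of_eq_sum_Ico hN (fun k i => ‖u k‖⁻¹ * b.coord i (x (n k)))
      (fun k => ?_) (fun k => by simpa using norm_smul_inv_norm (𝕜 := ℝ) (hu_ne k))
    simp only [u, SchauderBasis.proj_apply, ← Finset.sum_Ico_eq_sub _ (hN.monotone k.le_succ),
      Finset.smul_sum, smul_smul]
  obtain ⟨k, l, hkl, hle⟩ := h.exists_norm_smul_sub_smul_le hblock (c := fun k => ‖u k‖)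
    fun k => by simpa using hu_le k
  simp only [smul_inv_smul₀ (norm_ne_zero_iff.mpr (hu_ne _))] at hle
  refine ⟨n k, n l, (hn hkl).ne, ?_⟩
  calc ‖x (n k) - x (n l)‖ = ‖(x (n k) - u k) + (u k - u l) - (x (n l) - u l)‖ := by
        congr 1; abel
    _ ≤ ε + lam * (1 + ε) + ε := norm_sub_le_of_le (norm_add_le_of_le (hclose k) hle) (hclose l)
    _ = lam * (1 + ε) + 2 * ε := by ring

theorem le_of_weaklyNull_of_separated (h : IsAsymptoticC0 b lam) (hx : ∀ n, ‖x n‖ ≤ 1)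
    (hw : ∀ f : X →L[ℝ] ℝ, Tendsto (fun n => f (x n)) atTop (𝓝 0)) {r : ℝ}
    (hsep : ∀ n m, n ≠ m → r ≤ ‖x n - x m‖) : r ≤ lam := by
  rcases le_or_gt r 1 with hr | hr
  · exact hr.trans (h.one_le b.linearIndependent.ne_zero)
  -- `‖x n‖ < r - 1` would give `‖x n - x (n + 1)‖ < r`
  have hnorm : ∀ n, r - 1 ≤ ‖x n‖ := fun n => by
    linarith [hsep n (n + 1) n.succ_ne_self.symm, norm_sub_le (x n) (x (n + 1)), hx (n + 1)]
  have hlim : Tendsto (fun ε => lam * (1 + ε) + 2 * ε) (𝓝[>] 0) (𝓝 lam) := by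
    have hcont : Continuous fun ε : ℝ => lam * (1 + ε) + 2 * ε := by fun_prop
    simpa using (hcont.tendsto 0).mono_left nhdsWithin_le_nhds
  refine ge_of_tendsto hlim ?_
  filter_upwards [Ioo_mem_nhdsGT (sub_pos.mpr hr)] with ε ⟨hε, hεr⟩
  obtain ⟨n, m, hnm, hle⟩ := h.exists_norm_sub_le hx hw hε fun n => hεr.trans_le (hnorm n)
  exact (hsep n m hnm).trans hle

end IsAsymptoticC0

/-- The gliding-hump step in the proof of Theorem 4.2: if a Banach space `X` has a
`λ`-asymptotic `c₀` Schauder basis, then `γ₀(X) ≤ λ`. -/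
theorem gammaZero_le_of_asymptotic_c0 (X : Type*) [NormedAddCommGroup X]
    [NormedSpace ℝ X] [CompleteSpace X] (e : ℕ → X) (hbasis : IsSchauderBasis e)
    (lam : ℝ) (hasym : IsAsymptoticC0 e lam) :
    gammaZero X ≤ lam := by
  refine Real.sSup_le ?_ (zero_le_one.trans (hasym.one_le hbasis.ne_zero))
  rintro r ⟨-, x, hx, hw, hsep⟩
  exact IsAsymptoticC0.le_of_weaklyNull_of_separated (b := hbasis.toSchauderBasis) hasym hx hw hsep
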